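/- arXiv:2604.27639 — 4 statements merged into one kernel-verified Lean document; each statement's English description precedes it below -/
import Mathlib

section
/- Let k ≥ 2 be an integer and G a graph on n vertices with maximum degree Δ = s·n where 0 < s ≤ 1, and let T ⊆ V satisfy Σ_{u∈T} d(u) ≥ m·n for some real m ≥ 0. Then there exist (not necessarily distinct) vertices u₁,…,u_{k-1} such that |(N(u₁) ∪ ⋯ ∪ N(u_{k-1})) ∩ T| ≥ (1-(1-s)^{k-1})·m/s. -/
lemma geom_ineq (j : ℕ) (a b : ℝ) (hb : 0 ≤ b) (hba : b ≤ a) (ha : a ≤ 1) :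
    (1 - a) * (1 - b ^ j) ≤ (1 - b) * (1 - a ^ j) := by
  have h1 := geom_sum_mul a j
  have h2 := geom_sum_mul b j
  have hsum : ∑ i ∈ Finset.range j, b ^ i ≤ ∑ i ∈ Finset.range j, a ^ i :=
    Finset.sum_le_sum fun i _ => pow_le_pow_left₀ hb hba i
  nlinarith [mul_le_mul_of_nonneg_left (mul_le_mul_of_nonneg_left hsum
    (by linarith : (0:ℝ) ≤ 1 - b)) (by linarith : (0:ℝ) ≤ 1 - a)]

lemma count_pi (V : Type*) [Fintype V] [DecidableEq V] (j : ℕ) (S : Finset V) :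
    (Finset.univ.filter (fun w : Fin j → V => ∀ i, w i ∈ S)).card = S.card ^ j := by
  have : Finset.univ.filter (fun w : Fin j → V => ∀ i, w i ∈ S) =
      Fintype.piFinset (fun _ : Fin j => S) := by
    ext w; simp [Fintype.mem_piFinset]
  rw [this, Fintype.card_piFinset]; simp

lemma main_count (V : Type*) [Fintype V] [DecidableEq V]
    (G : SimpleGraph V) [DecidableRel G.Adj] (j : ℕ) (T : Finset V) :
    ∑ w : Fin j → V, ((Finset.univ.biUnion fun i => G.neighborFinset (w i)) ∩ T).card
      = ∑ u ∈ T, ((Fintype.card V) ^ j - ((Fintype.card V) - G.degree u) ^ j) := by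
  have step1 : ∀ w : Fin j → V,
      ((Finset.univ.biUnion fun i => G.neighborFinset (w i)) ∩ T).card
      = ∑ u ∈ T, if ∃ i, G.Adj u (w i) then 1 else 0 := by
    intro w
    rw [Finset.inter_comm, ← Finset.filter_mem_eq_inter, Finset.card_filter]
    apply Finset.sum_congr rfl
    intro u _
    simp [SimpleGraph.mem_neighborFinset, G.adj_comm]
  simp only [step1]
  rw [Finset.sum_comm]
  apply Finset.sum_congr rfl
  intro u _
  rw [← Finset.card_filter]
  have hcompl : (Finset.univ.filter (fun w : Fin j → V => ¬ ∃ i, G.Adj u (w i))).card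
      = ((Fintype.card V) - G.degree u) ^ j := by
    have : (Finset.univ.filter (fun w : Fin j → V => ¬ ∃ i, G.Adj u (w i)))
        = Finset.univ.filter (fun w : Fin j → V => ∀ i, w i ∈ (G.neighborFinset u)ᶜ) := by
      apply Finset.filter_congr
      intro w _
      simp [SimpleGraph.mem_neighborFinset, G.adj_comm]
    rw [this, count_pi, Finset.card_compl, SimpleGraph.card_neighborFinset_eq_degree]
  have htot := Finset.card_filter_add_card_filter_not
    (s := (Finset.univ : Finset (Fin j → V))) (p := fun w => ∃ i, G.Adj u (w i))
  rw [hcompl] at htot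
  have hcard : (Finset.univ : Finset (Fin j → V)).card = (Fintype.card V) ^ j := by
    simp [Fintype.card_fun]
  rw [hcard] at htot
  exact Nat.eq_sub_of_add_eq htot

theorem stmt_7 (k : ℕ) (hk : 2 ≤ k) (V : Type*) [Fintype V] [DecidableEq V] [Nonempty V]
    (G : SimpleGraph V) [DecidableRel G.Adj] (n : ℕ) (hn : n = Fintype.card V)
    (s : ℝ) (hs0 : 0 < s) (hs1 : s ≤ 1)
    (hΔ : (G.maxDegree : ℝ) = s * n)
    (T : Finset V) (m : ℝ) (hm : 0 ≤ m)
    (hT : (∑ u ∈ T, (G.degree u : ℝ)) ≥ m * n) :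
    ∃ w : Fin (k - 1) → V,
      ((((Finset.univ.biUnion fun i => G.neighborFinset (w i)) ∩ T).card : ℝ) ≥
        (1 - (1 - s) ^ (k - 1)) * m / s) := by
  set j := k - 1 with hj
  have hnpos : 0 < n := by rw [hn]; exact Fintype.card_pos
  have hnR : (0:ℝ) < n := by exact_mod_cast hnpos
  set c : ℝ := (1 - (1 - s) ^ j) * m / s with hc
  have hpow_nonneg : 0 ≤ 1 - (1 - s) ^ j := by
    have : (1 - s) ^ j ≤ 1 := pow_le_one₀ (by linarith) (by linarith)
    linarith
  -- degree bounds
  have hd_le : ∀ u : V, (G.degree u : ℝ) ≤ s * n := fun u => by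
    calc (G.degree u : ℝ) ≤ (G.maxDegree : ℝ) := by
          exact_mod_cast G.degree_le_maxDegree u
      _ = s * n := hΔ
  have hd_le_n : ∀ u : V, G.degree u ≤ n := fun u => by
    rw [hn]; exact le_of_lt (G.degree_lt_card_verts u)
  -- pointwise inequality
  have hpt : ∀ u : V, (1 - (1 - s) ^ j) / s * (G.degree u : ℝ) / n * (n:ℝ) ^ j
      ≤ (n:ℝ) ^ j - ((n:ℝ) - G.degree u) ^ j := by
    intro u
    have hd0 : (0:ℝ) ≤ G.degree u := Nat.cast_nonneg _
    have hx : (G.degree u : ℝ) / n ≤ s := by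
      rw [div_le_iff₀ hnR]; exact hd_le u
    have key := geom_ineq j (1 - (G.degree u : ℝ) / n) (1 - s)
      (by linarith) (by linarith)
      (by have h : (0:ℝ) ≤ (G.degree u:ℝ)/n := by positivity
          linarith)
    -- key : (d/n) * (1 - (1-s)^j) ≤ s * (1 - (1 - d/n)^j)
    simp only [sub_sub_cancel] at key
    have hnj : (0:ℝ) < (n:ℝ) ^ j := by positivity
    have h2 : ((n:ℝ) - G.degree u) ^ j = (1 - (G.degree u : ℝ)/n) ^ j * (n:ℝ)^j := by
      rw [← mul_pow]; congr 1; field_simp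
    rw [h2]
    have : (1 - (1 - s) ^ j) / s * ((G.degree u:ℝ) / n)
        ≤ 1 - (1 - (G.degree u : ℝ)/n) ^ j := by
      rw [div_mul_eq_mul_div, div_le_iff₀ hs0]
      nlinarith [key]
    calc (1 - (1 - s) ^ j) / s * (G.degree u : ℝ) / n * (n:ℝ) ^ j
        = ((1 - (1 - s) ^ j) / s * ((G.degree u:ℝ) / n)) * (n:ℝ)^j := by ring
      _ ≤ (1 - (1 - (G.degree u : ℝ)/n) ^ j) * (n:ℝ)^j :=
          mul_le_mul_of_nonneg_right this (le_of_lt hnj)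
      _ = (n:ℝ)^j - (1 - (G.degree u : ℝ)/n) ^ j * (n:ℝ)^j := by ring
  -- sum bound
  have hsum : (n:ℝ)^j * c ≤ ∑ u ∈ T, ((n:ℝ)^j - ((n:ℝ) - G.degree u)^j) := by
    have h1 : ∑ u ∈ T, (1 - (1 - s) ^ j) / s * (G.degree u : ℝ) / n * (n:ℝ) ^ j
        ≤ ∑ u ∈ T, ((n:ℝ)^j - ((n:ℝ) - G.degree u)^j) :=
      Finset.sum_le_sum fun u _ => hpt u
    have h2 : ∑ u ∈ T, (1 - (1 - s) ^ j) / s * (G.degree u : ℝ) / n * (n:ℝ) ^ j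
        = (1 - (1 - s) ^ j) / s / n * (n:ℝ)^j * ∑ u ∈ T, (G.degree u : ℝ) := by
      rw [Finset.mul_sum]; apply Finset.sum_congr rfl; intro u _; ring
    have h3 : (1 - (1 - s) ^ j) / s / n * (n:ℝ)^j * (m * n)
        ≤ (1 - (1 - s) ^ j) / s / n * (n:ℝ)^j * ∑ u ∈ T, (G.degree u : ℝ) := by
      apply mul_le_mul_of_nonneg_left hT
      positivity
    have h4 : (1 - (1 - s) ^ j) / s / n * (n:ℝ)^j * (m * n) = (n:ℝ)^j * c := by
      rw [hc]; field_simp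
    linarith [h1, h2 ▸ h1, h3]
  -- connect to natural number sum
  have hcount := main_count V G j T
  rw [← hn] at hcount
  have hcast : ((∑ w : Fin j → V,
      ((Finset.univ.biUnion fun i => G.neighborFinset (w i)) ∩ T).card : ℕ) : ℝ)
      = ∑ u ∈ T, ((n:ℝ)^j - ((n:ℝ) - G.degree u)^j) := by
    rw [hcount]
    push_cast
    apply Finset.sum_congr rfl
    intro u _
    have h1 : G.degree u ≤ n := hd_le_n u
    have h2 : (n - G.degree u) ^ j ≤ n ^ j :=
      Nat.pow_le_pow_left (Nat.sub_le _ _) j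
    rw [Nat.cast_sub h2, Nat.cast_pow, Nat.cast_pow, Nat.cast_sub h1]
  -- averaging
  have huniv : (Finset.univ : Finset (Fin j → V)).Nonempty := Finset.univ_nonempty
  have hsum2 : ∑ _w : Fin j → V, c ≤ ∑ w : Fin j → V,
      (((Finset.univ.biUnion fun i => G.neighborFinset (w i)) ∩ T).card : ℝ) := by
    have hconst : ∑ _w : Fin j → V, c = (n:ℝ)^j * c := by
      rw [Finset.sum_const, nsmul_eq_mul]
      congr 1
      rw [Finset.card_univ, Fintype.card_fun, hn]
      push_cast
      simp
    have : (∑ w : Fin j → V,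
        (((Finset.univ.biUnion fun i => G.neighborFinset (w i)) ∩ T).card : ℝ))
        = ((∑ w : Fin j → V,
          ((Finset.univ.biUnion fun i => G.neighborFinset (w i)) ∩ T).card : ℕ) : ℝ) := by
      push_cast; rfl
    rw [hconst, this, hcast]
    exact hsum
  obtain ⟨w, _, hw⟩ := Finset.exists_le_of_sum_le huniv hsum2
  exact ⟨w, hw⟩
end

section
/- Let k ≥ 2 be an integer and 0 < c < 1. Define F(s) = s + (1-(1-s)^{k-1})(c-s²)/s and G(c) = 1-(1-c)^k. Then for every s ∈ [c, √c], F(s) ≥ min{G(c), √c}. -/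
set_option maxHeartbeats 1000000 in
theorem stmt_8 (k : ℕ) (hk : 2 ≤ k) (c : ℝ) (hc0 : 0 < c) (hc1 : c < 1)
    (s : ℝ) (hs : s ∈ Set.Icc c (Real.sqrt c)) :
    s + (1 - (1 - s) ^ (k - 1)) * (c - s ^ 2) / s ≥
      min (1 - (1 - c) ^ k) (Real.sqrt c) := by
  obtain ⟨hcs, hst⟩ := hs
  set t := Real.sqrt c with htdef
  have ht0 : 0 < t := Real.sqrt_pos.mpr hc0
  have ht2 : t ^ 2 = c := Real.sq_sqrt hc0.le
  have ht1 : t < 1 := by nlinarith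
  have hs0 : 0 < s := lt_of_lt_of_le hc0 hcs
  have hs1 : s < 1 := lt_of_le_of_lt hst ht1
  have hsc : s ^ 2 ≤ c := by nlinarith
  set n := k - 1 with hn
  have hkn : k = n + 1 := by omega
  have hn1 : 1 ≤ n := by omega
  set p := (1 - s) ^ n with hpdef
  set q := (1 - c) ^ n with hqdef
  have hp0 : 0 < p := pow_pos (by linarith) n
  have hp1 : p ≤ 1 := pow_le_one₀ (by linarith) (by linarith)
  have hq1 : q ≤ 1 := pow_le_one₀ (by linarith) (by linarith)
  have hpq : p ≤ q := pow_le_pow_left₀ (by linarith) (by linarith) n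
  have hrw : s + (1 - p) * (c - s ^ 2) / s = (s ^ 2 + (1 - p) * (c - s ^ 2)) / s := by
    field_simp
  rcases le_total (p * (t + s)) t with hCase | hCase
  · -- F ≥ t = √c
    refine le_trans (min_le_right _ _) ?_
    rw [hrw, le_div_iff₀ hs0]
    nlinarith [mul_nonneg (sub_nonneg.2 hst) (sub_nonneg.2 hCase)]
  · -- F ≥ 1 - (1-c)^k
    refine le_trans (min_le_left _ _) ?_
    rw [hrw, le_div_iff₀ hs0]
    -- Bernoulli facts
    have hBern1 : 1 + (n : ℝ) * s ≤ (1 + s) ^ n := one_add_mul_le_pow (by linarith) n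
    have hps : p * (1 + s) ^ n = (1 - s ^ 2) ^ n := by
      rw [hpdef, ← mul_pow]; ring_nf
    have h1s2 : ((1 : ℝ) - s ^ 2) ^ n ≤ 1 := pow_le_one₀ (by nlinarith) (by nlinarith)
    have step1 : p * (1 + (n : ℝ) * s) ≤ 1 := by nlinarith
    have step2 : (n : ℝ) * t ≤ 1 := by
      have h1 : t * (1 + (n : ℝ) * s) ≤ p * (t + s) * (1 + (n : ℝ) * s) := by
        apply mul_le_mul_of_nonneg_right hCase
        positivity
      have h2 : p * (t + s) * (1 + (n : ℝ) * s) = (t + s) * (p * (1 + (n : ℝ) * s)) := by ring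
      have h3 : (t + s) * (p * (1 + (n : ℝ) * s)) ≤ (t + s) * 1 := by
        apply mul_le_mul_of_nonneg_left step1 (by linarith)
      have h4 : t * ((n : ℝ) * s) ≤ s := by linarith [h2 ▸ h1]
      nlinarith [h4, hs0]
    have hBern2 : 1 - (n : ℝ) * c ≤ q := by
      have h := one_add_mul_le_pow (a := -c) (by linarith) n
      rw [show (1:ℝ) + -c = 1 - c by ring] at h
      rw [hqdef]; linarith
    have step4 : 1 - q ≤ t := by
      have h5 : (n : ℝ) * t * t ≤ 1 * t := mul_le_mul_of_nonneg_right step2 ht0.le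
      have h6 : (n : ℝ) * c = (n : ℝ) * t * t := by rw [← ht2]; ring
      linarith
    have hts : t * (1 - p) ≤ s * p := by
      have hexp : p * (t + s) = p * t + p * s := by ring
      linarith
    have step5 : (1 - q) * (1 - p) ≤ s * p :=
      le_trans (mul_le_mul_of_nonneg_right step4 (by linarith)) hts
    -- geometric sums
    set A : ℝ := ∑ i ∈ Finset.range k, (1 - c) ^ i * (1 - s) ^ (k - 1 - i) with hAdef
    set B : ℝ := ∑ i ∈ Finset.range n, (1 - s) ^ i with hBdef
    have hA' : A * (s - c) = (1 - c) ^ k - (1 - s) ^ k := by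
      have h := geom_sum₂_mul (1 - c) (1 - s) k
      calc A * (s - c) = A * ((1 - c) - (1 - s)) := by ring
        _ = (1 - c) ^ k - (1 - s) ^ k := h
    have hB' : B * s = 1 - p := by
      have h := geom_sum_mul (1 - s) n
      have : B * (-s) = p - 1 := by
        calc B * (-s) = B * ((1 - s) - 1) := by ring
          _ = (1 - s) ^ n - 1 := h
      linarith
    -- A ≥ B
    have hBrefl : B = ∑ i ∈ Finset.range n, (1 - s) ^ (n - 1 - i) := by
      rw [hBdef, ← Finset.sum_range_reflect]
    have hAsplit : A = (∑ i ∈ Finset.range n, (1 - c) ^ (i + 1) * (1 - s) ^ (n - 1 - i)) + p := by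
      rw [hAdef, hkn, Finset.sum_range_succ']
      congr 1
      · apply Finset.sum_congr rfl
        intro i hi
        congr 2
        omega
      · simp [hpdef]
    have hsum : (∑ i ∈ Finset.range n, (1 - s) ^ (n - 1 - i))
        ≤ (∑ i ∈ Finset.range n, (1 - c) ^ (i + 1) * (1 - s) ^ (n - 1 - i))
          + (1 - q) * (∑ i ∈ Finset.range n, (1 - s) ^ (n - 1 - i)) := by
      rw [Finset.mul_sum, ← Finset.sum_add_distrib]
      apply Finset.sum_le_sum
      intro i hi
      have hxq : q ≤ (1 - c) ^ (i + 1) := by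
        rw [hqdef]
        exact pow_le_pow_of_le_one (by linarith) (by linarith) (by simp at hi; omega)
      have hy : (0 : ℝ) ≤ (1 - s) ^ (n - 1 - i) := pow_nonneg (by linarith) _
      nlinarith
    have hAB : B ≤ A := by
      rw [hBrefl]
      rw [hBrefl] at hB'
      set B' : ℝ := ∑ i ∈ Finset.range n, (1 - s) ^ (n - 1 - i) with hB'def
      have hABp : B' ≤ (A - p) + (1 - q) * B' := by
        rw [hAsplit]; linarith [hsum]
      -- need p ≥ (1-q) * B', with B' * s = 1 - p
      nlinarith [step5, hs0]
    -- conclude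
    have hk1 : (1 - s) ^ k = (1 - s) * p := by rw [hkn, pow_succ, hpdef]; ring
    nlinarith [mul_nonneg (mul_nonneg hs0.le (sub_nonneg.2 hcs)) (sub_nonneg.2 hAB), hA', hB', hk1]
end

section
/- Let k ≥ 2 be an integer and 0 < c < 1 with 1 - (1-c)^k ≤ √c. Define P(x) = Σ_{i=0}^{k-1} (1-c)^{k-1-i} x^i - Σ_{i=0}^{k-2} x^i. Then P(x) ≥ 0 for every x ∈ [1-√c, 1-c]. -/
theorem stmt_12 (k : ℕ) (hk : 2 ≤ k) (c : ℝ) (hc0 : 0 < c) (hc1 : c < 1)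
    (hG : 1 - (1 - c) ^ k ≤ Real.sqrt c) :
    ∀ x ∈ Set.Icc (1 - Real.sqrt c) (1 - c),
      0 ≤ (∑ i ∈ Finset.range k, (1 - c) ^ (k - 1 - i) * x ^ i) -
          ∑ i ∈ Finset.range (k - 1), x ^ i := by
  obtain ⟨n, rfl⟩ : ∃ n, k = n + 1 := ⟨k - 1, by omega⟩
  intro x hx
  obtain ⟨hx1, hx2⟩ := hx
  simp only [Nat.add_sub_cancel]
  set s := Real.sqrt c with hs
  have hs0 : 0 < s := Real.sqrt_pos.mpr hc0
  have hss : s * s = c := Real.mul_self_sqrt hc0.le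
  have hsn : 0 ≤ s := hs0.le
  have hs1 : s < 1 := by nlinarith
  have hcs : c < s := by nlinarith
  set a : ℝ := 1 - c with ha
  set t : ℝ := 1 - s with ht
  have ht0 : 0 < t := by rw [ht]; linarith
  have ha1 : a < 1 := by rw [ha]; linarith
  have ha0 : 0 < a := by rw [ha]; linarith
  have htx : t ≤ x := hx1
  have hx0 : 0 < x := lt_of_lt_of_le ht0 htx
  -- identity: P(y) = y^n + ∑ (a^(n-i) - 1) y^i
  have identA : ∀ y : ℝ,
      (∑ i ∈ Finset.range (n + 1), a ^ (n - i) * y ^ i) - ∑ i ∈ Finset.range n, y ^ i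
      = y ^ n + ∑ i ∈ Finset.range n, (a ^ (n - i) - 1) * y ^ i := by
    intro y
    have h : ∑ i ∈ Finset.range n, (a ^ (n - i) - 1) * y ^ i
        = (∑ i ∈ Finset.range n, a ^ (n - i) * y ^ i) - ∑ i ∈ Finset.range n, y ^ i := by
      rw [← Finset.sum_sub_distrib]
      exact Finset.sum_congr rfl fun i _ => by ring
    rw [Finset.sum_range_succ, h]
    simp [Nat.sub_self]
    ring
  -- geometric sum identities at t
  have hgeom1 : (∑ i ∈ Finset.range (n + 1), a ^ (n - i) * t ^ i) * (t - a)
      = t ^ (n + 1) - a ^ (n + 1) := by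
    have h := geom_sum₂_mul t a (n + 1)
    simp only [Nat.add_sub_cancel] at h
    rw [← h]
    congr 1
    exact Finset.sum_congr rfl fun i _ => by ring
  have hgeom2 : (∑ i ∈ Finset.range n, t ^ i) * (t - 1) = t ^ n - 1 := geom_sum_mul t n
  -- value at left endpoint
  have hPt : s * t * ((∑ i ∈ Finset.range (n + 1), a ^ (n - i) * t ^ i)
      - ∑ i ∈ Finset.range n, t ^ i) = a ^ (n + 1) - t := by
    have hta' : t - a = -(s * t) := by rw [ht, ha, ← hss]; ring
    have ht1 : t - 1 = -s := by rw [ht]; ring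
    have e1 : (∑ i ∈ Finset.range (n + 1), a ^ (n - i) * t ^ i) * (s * t)
        = a ^ (n + 1) - t ^ (n + 1) := by
      have h := hgeom1; rw [hta'] at h; linarith [h]
    have e2 : (∑ i ∈ Finset.range n, t ^ i) * s = 1 - t ^ n := by
      have h := hgeom2; rw [ht1] at h; linarith [h]
    linear_combination e1 - t * e2
  have hPt0 : 0 ≤ (∑ i ∈ Finset.range (n + 1), a ^ (n - i) * t ^ i)
      - ∑ i ∈ Finset.range n, t ^ i := by
    nlinarith [hPt, mul_pos hs0 ht0, hG]
  -- difference identity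
  have hdiff : t ^ n * ((∑ i ∈ Finset.range (n + 1), a ^ (n - i) * x ^ i)
        - ∑ i ∈ Finset.range n, x ^ i)
      - x ^ n * ((∑ i ∈ Finset.range (n + 1), a ^ (n - i) * t ^ i)
        - ∑ i ∈ Finset.range n, t ^ i)
      = ∑ i ∈ Finset.range n, (a ^ (n - i) - 1) * (t ^ n * x ^ i - x ^ n * t ^ i) := by
    have key : ∑ i ∈ Finset.range n, (a ^ (n - i) - 1) * (t ^ n * x ^ i - x ^ n * t ^ i)
        = t ^ n * (∑ i ∈ Finset.range n, (a ^ (n - i) - 1) * x ^ i)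
          - x ^ n * (∑ i ∈ Finset.range n, (a ^ (n - i) - 1) * t ^ i) := by
      rw [Finset.mul_sum, Finset.mul_sum, ← Finset.sum_sub_distrib]
      exact Finset.sum_congr rfl fun i _ => by ring
    rw [identA x, identA t, key]
    ring
  -- each term of the sum is nonnegative
  have hnonneg : 0 ≤ ∑ i ∈ Finset.range n,
      (a ^ (n - i) - 1) * (t ^ n * x ^ i - x ^ n * t ^ i) := by
    apply Finset.sum_nonneg
    intro i hi
    rw [Finset.mem_range] at hi
    have h1 : a ^ (n - i) ≤ 1 := pow_le_one₀ ha0.le ha1.le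
    have h2 : t ^ n * x ^ i ≤ x ^ n * t ^ i := by
      have e1 : t ^ n = t ^ i * t ^ (n - i) := by rw [← pow_add]; congr 1; omega
      have e2 : x ^ n = x ^ i * x ^ (n - i) := by rw [← pow_add]; congr 1; omega
      have h3 : t ^ (n - i) ≤ x ^ (n - i) := pow_le_pow_left₀ ht0.le htx _
      calc t ^ n * x ^ i = (t ^ i * x ^ i) * t ^ (n - i) := by rw [e1]; ring
        _ ≤ (t ^ i * x ^ i) * x ^ (n - i) := by
            apply mul_le_mul_of_nonneg_left h3
            positivity
        _ = x ^ n * t ^ i := by rw [e2]; ring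
    nlinarith [h1, h2]
  have hxn : 0 ≤ x ^ n := pow_nonneg hx0.le n
  have htn : 0 < t ^ n := pow_pos ht0 n
  nlinarith [hdiff, hnonneg, hPt0, mul_nonneg hxn hPt0, htn]
end

section
/- Let k ≥ 2 be an integer, 0 < c < 1, and define Q(x) = √c·Σ_{i=0}^{k-2} x^i - x^{k-1}. If (1-c)^{k-1}(1+√c) ≤ 1, then Q(x) ≥ 0 for all x ∈ [0, 1-c]. -/
theorem stmt_13 (k : ℕ) (hk : 2 ≤ k) (c : ℝ) (hc0 : 0 < c) (hc1 : c < 1)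
    (h : (1 - c) ^ (k - 1) * (1 + Real.sqrt c) ≤ 1) :
    ∀ x ∈ Set.Icc (0 : ℝ) (1 - c),
      0 ≤ Real.sqrt c * (∑ i ∈ Finset.range (k - 1), x ^ i) - x ^ (k - 1) := by
  intro x hx
  obtain ⟨hx0, hxy⟩ := hx
  set s := Real.sqrt c with hs
  have hs0 : 0 < s := Real.sqrt_pos.mpr hc0
  have hs2 : s ^ 2 = c := Real.sq_sqrt hc0.le
  set n := k - 1 with hn
  set y : ℝ := 1 - c with hyd
  have hy0 : 0 < y := by simp [hyd]; linarith
  -- Q(1-c) ≥ 0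
  have hQy : 0 ≤ s * (∑ i ∈ Finset.range n, y ^ i) - y ^ n := by
    have hgs : (∑ i ∈ Finset.range n, y ^ i) * (y - 1) = y ^ n - 1 := geom_sum_mul y n
    have hyc : y - 1 = -c := by simp [hyd]
    rw [hyc, mul_neg, mul_comm] at hgs
    -- c * S = 1 - y^n
    have hSc : c * (∑ i ∈ Finset.range n, y ^ i) = 1 - y ^ n := by linarith
    have hyn : 0 < y ^ n := pow_pos hy0 n
    nlinarith [mul_le_mul_of_nonneg_left h hs0.le, hSc, hs0, hs2, hyn]
  -- termwise comparison: Σ y^i * x^n ≤ Σ x^i * y^n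
  have hsum : (∑ i ∈ Finset.range n, y ^ i) * x ^ n ≤ (∑ i ∈ Finset.range n, x ^ i) * y ^ n := by
    rw [Finset.sum_mul, Finset.sum_mul]
    apply Finset.sum_le_sum
    intro i hi
    have hin : i < n := Finset.mem_range.mp hi
    have hxn : x ^ n = x ^ i * x ^ (n - i) := by
      rw [← pow_add]; congr 1; omega
    have hyn : y ^ n = y ^ i * y ^ (n - i) := by
      rw [← pow_add]; congr 1; omega
    rw [hxn, hyn]
    have h1 : x ^ (n - i) ≤ y ^ (n - i) := pow_le_pow_left₀ hx0 hxy _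
    have h2 : (0:ℝ) ≤ x ^ i := pow_nonneg hx0 i
    have h3 : (0:ℝ) ≤ y ^ i := pow_nonneg hy0.le i
    calc y ^ i * (x ^ i * x ^ (n - i)) = x ^ i * y ^ i * x ^ (n - i) := by ring
      _ ≤ x ^ i * y ^ i * y ^ (n - i) := by
          apply mul_le_mul_of_nonneg_left h1 (mul_nonneg h2 h3)
      _ = x ^ i * (y ^ i * y ^ (n - i)) := by ring
  have hkey : (s * (∑ i ∈ Finset.range n, y ^ i) - y ^ n) * x ^ n
      ≤ (s * (∑ i ∈ Finset.range n, x ^ i) - x ^ n) * y ^ n := by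
    nlinarith [mul_le_mul_of_nonneg_left hsum hs0.le]
  nlinarith [mul_nonneg hQy (pow_nonneg hx0 n), pow_pos hy0 n, hkey]
end
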